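/- arXiv:1703.05847 — 2 statements merged into one kernel-verified Lean document; each statement's English description precedes it below -/
import Mathlib

section
/- For any monic polynomial p of degree d ≥ 1 over ℂ and any z ∈ ℂ with p'(z) ≠ 0, the closed disk centered at z of radius d·|p(z)/p'(z)| contains at least one root of p. -/
open Polynomial

theorem newton_displacement_disk_contains_root
    (p : Polynomial ℂ) (d : ℕ) (hp : p.Monic) (hd : p.natDegree = d) (hd1 : 1 ≤ d)
    (z : ℂ) (hz : eval z (derivative p) ≠ 0) :
    ∃ w : ℂ, p.IsRoot w ∧
      ‖w - z‖ ≤ d * ‖eval z p / eval z (derivative p)‖ := by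
  classical
  by_cases hpz : eval z p = 0
  · exact ⟨z, hpz, by simp; positivity⟩
  set S := p.roots with hS
  have hcard : Multiset.card S = d := by
    rw [hS, splits_iff_card_roots.mp (IsAlgClosed.splits p), hd]
  have hcardn : Multiset.card S = p.natDegree := by rw [hcard, hd]
  have hprod : (S.map fun a => X - C a).prod = p :=
    prod_multiset_X_sub_C_of_monic_of_roots_card_eq hp hcardn
  have hevalp : eval z p = (S.map fun a => z - a).prod := by
    conv_lhs => rw [← hprod]
    rw [eval_multiset_prod, Multiset.map_map]
    simp [Function.comp]
  -- the radius
  set R : ℝ := d * ‖eval z p / eval z (derivative p)‖ with hR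
  have hRpos : 0 < R := by
    have h2 : eval z p / eval z (derivative p) ≠ 0 := div_ne_zero hpz hz
    exact mul_pos (Nat.cast_pos.mpr hd1) (norm_pos_iff.mpr h2)
  by_contra hcon
  push_neg at hcon
  have hfar : ∀ a ∈ S, R < ‖z - a‖ := by
    intro a ha
    have hroot : p.IsRoot a := by
      rw [hS] at ha
      exact isRoot_of_mem_roots ha
    have := hcon a hroot
    rwa [← norm_neg, neg_sub] at this
  -- derivative formula
  have hderiv : eval z (derivative p) =
      (S.map fun a => ((S.erase a).map fun b => z - b).prod).sum := by
    conv_lhs => rw [← hprod]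
    rw [derivative_prod, ← coe_evalRingHom, map_multiset_sum, Multiset.map_map]
    refine congrArg _ (Multiset.map_congr rfl fun a _ => ?_)
    simp [Function.comp, coe_evalRingHom, eval_multiset_prod, Multiset.map_map]
  -- each term has abs |p(z)| / |z - a| < |p(z)| / R
  have hterm : ∀ a ∈ S,
      ‖((S.erase a).map fun b => z - b).prod‖ < ‖eval z p‖ / R := by
    intro a ha
    have hsplit : ‖eval z p‖
        = ‖z - a‖ * ‖((S.erase a).map fun b => z - b).prod‖ := by
      rw [hevalp, ← norm_mul]
      congr 1
      conv_lhs => rw [← Multiset.cons_erase ha]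
      rw [Multiset.map_cons, Multiset.prod_cons]
    have hza : (0:ℝ) < ‖z - a‖ := hRpos.trans (hfar a ha)
    have habs : ‖((S.erase a).map fun b => z - b).prod‖
        = ‖eval z p‖ / ‖z - a‖ := by
      rw [hsplit, mul_comm, mul_div_assoc, div_self hza.ne', mul_one]
    rw [habs]
    have hpabs : (0:ℝ) < ‖eval z p‖ := by
      simpa [norm_pos_iff] using hpz
    exact div_lt_div_of_pos_left hpabs hRpos (hfar a ha)
  -- sum up
  have hsum : ‖eval z (derivative p)‖ < d * (‖eval z p‖ / R) := by
    rw [hderiv]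
    have hne : S ≠ ∅ := by
      intro h
      rw [h] at hcard
      simp at hcard
      omega
    calc ‖(S.map fun a => ((S.erase a).map fun b => z - b).prod).sum‖
        ≤ (S.map fun a => ‖((S.erase a).map fun b => z - b).prod‖).sum := by
          simpa [Multiset.map_map, Function.comp] using
            norm_multiset_sum_le (S.map fun a => ((S.erase a).map fun b => z - b).prod)
      _ < (S.map fun _ => ‖eval z p‖ / R).sum :=
          Multiset.sum_lt_sum_of_nonempty hne hterm
      _ = d * (‖eval z p‖ / R) := by
          rw [Multiset.map_const', Multiset.sum_replicate, hcard, nsmul_eq_mul]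
  -- contradiction
  have hRdef : R = d * (‖eval z p‖ / ‖eval z (derivative p)‖) := by
    rw [hR, norm_div]
  have : ‖eval z (derivative p)‖ < ‖eval z (derivative p)‖ := by
    calc ‖eval z (derivative p)‖ < d * (‖eval z p‖ / R) := hsum
      _ = ‖eval z (derivative p)‖ := by
          rw [hRdef]
          have h1 : (0:ℝ) < d := Nat.cast_pos.mpr hd1
          have hpabs : (0:ℝ) < ‖eval z p‖ := by
            simpa [norm_pos_iff] using hpz
          have hdabs : (0:ℝ) < ‖eval z (derivative p)‖ := by
            simpa [norm_pos_iff] using hz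
          field_simp
  exact absurd this (lt_irrefl _)
end

section
/- If a monic polynomial p of degree d has all roots in the closed unit disk and |z| > 1, then p'(z) ≠ 0 and |p(z)/p'(z)| ≤ |z| + 1 (the Newton displacement is bounded by the distance to the farthest possible root). -/
open Polynomial Finset

/-- Per-term bound: for `|α| ≤ 1 < |z|`, `Re(z/(z-α)) ≥ |z|/(|z|+1)`. -/
lemma newton_key_term (z a : ℂ) (ha : ‖a‖ ≤ 1) (hz : 1 < ‖z‖) :
    ‖z‖ / (‖z‖ + 1) ≤ (z / (z - a)).re := by
  have hw : z - a ≠ 0 := by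
    intro h
    rw [sub_eq_zero] at h
    exact absurd ha (not_le.mpr (h ▸ hz))
  set r := ‖z‖ with hr
  have hns : 0 < Complex.normSq (z - a) := Complex.normSq_pos.mpr hw
  have hre : (z / (z - a)).re =
      (z.re * (z - a).re + z.im * (z - a).im) / Complex.normSq (z - a) := by
    rw [Complex.div_re]; ring
  rw [hre]
  rw [div_le_div_iff₀ (by positivity) hns]
  have h1 : z.re ^ 2 + z.im ^ 2 = r ^ 2 := by
    rw [hr, Complex.sq_norm, Complex.normSq_apply]; ring
  have h2 : a.re ^ 2 + a.im ^ 2 = (‖a‖) ^ 2 := by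
    rw [Complex.sq_norm, Complex.normSq_apply]; ring
  have ha2 : (‖a‖) ^ 2 ≤ 1 := by nlinarith [norm_nonneg a]
  have hr0 : (0:ℝ) < r := lt_trans one_pos hz
  have hcs : (z.re * a.re + z.im * a.im) ^ 2 ≤ r ^ 2 * (‖a‖) ^ 2 := by
    nlinarith [sq_nonneg (z.re * a.im - z.im * a.re)]
  have hs : -(r * 1) ≤ z.re * a.re + z.im * a.im := by
    nlinarith [norm_nonneg a, hr0.le]
  simp only [Complex.normSq_apply, Complex.sub_re, Complex.sub_im]
  nlinarith [hs, ha2, h1, hr0]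

/-- Evaluation of the derivative of a product of linear factors. -/
lemma newton_eval_deriv_prod (α : ℕ → ℂ) (z : ℂ) (s : Finset ℕ)
    (h : ∀ i ∈ s, z - α i ≠ 0) :
    eval z (derivative (∏ i ∈ s, (X - C (α i)))) =
      (∑ i ∈ s, (z - α i)⁻¹) * ∏ i ∈ s, (z - α i) := by
  classical
  induction s using Finset.induction_on with
  | empty => simp
  | @insert x s hx ih =>
    have hxz : z - α x ≠ 0 := h x (Finset.mem_insert_self x s)
    have hrest : ∀ i ∈ s, z - α i ≠ 0 := fun i hi => h i (Finset.mem_insert_of_mem hi)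
    rw [Finset.prod_insert hx, Finset.sum_insert hx, Finset.prod_insert hx,
      derivative_mul, eval_add, eval_mul, eval_mul, ih hrest]
    simp only [derivative_sub, derivative_X, derivative_C, sub_zero, eval_one, eval_sub,
      eval_X, eval_C, eval_prod]
    field_simp

theorem newton_displacement_upper_bound (d : ℕ) (hd : 1 ≤ d) (α : ℕ → ℂ)
    (hα : ∀ i ∈ Finset.range d, ‖α i‖ ≤ 1)
    (p : Polynomial ℂ) (hp : p = ∏ i ∈ Finset.range d, (X - C (α i)))
    (z : ℂ) (hz : 1 < ‖z‖) :
    eval z (derivative p) ≠ 0 ∧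
      ‖eval z p / eval z (derivative p)‖ ≤ ‖z‖ + 1 := by
  set r := ‖z‖ with hr
  have hr0 : (0:ℝ) < r := lt_trans one_pos hz
  have hzne : ∀ i ∈ Finset.range d, z - α i ≠ 0 := by
    intro i hi h
    rw [sub_eq_zero] at h
    have := hα i hi
    rw [← h] at this
    linarith
  set S := ∑ i ∈ Finset.range d, (z - α i)⁻¹ with hS
  have hreS : (d : ℝ) * (r / (r + 1)) ≤ (z * S).re := by
    have hzs : z * S = ∑ i ∈ Finset.range d, z / (z - α i) := by
      rw [hS, Finset.mul_sum]
      exact Finset.sum_congr rfl fun i _ => (div_eq_mul_inv z _).symm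
    rw [hzs, Complex.re_sum]
    calc (d : ℝ) * (r / (r + 1)) = ∑ _i ∈ Finset.range d, r / (r + 1) := by
          simp [Finset.sum_const, mul_comm]
      _ ≤ ∑ i ∈ Finset.range d, (z / (z - α i)).re :=
          Finset.sum_le_sum fun i hi => newton_key_term z (α i) (hα i hi) hz
  have hd1 : (1:ℝ) ≤ (d:ℝ) := by exact_mod_cast hd
  have hrpos : 0 < r / (r + 1) := by positivity
  have hlow : r / (r + 1) ≤ (z * S).re := le_trans (by nlinarith) hreS
  have habszS : r / (r + 1) ≤ ‖z * S‖ :=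
    le_trans hlow (Complex.re_le_norm _)
  have habsS : 1 / (r + 1) ≤ ‖S‖ := by
    rw [norm_mul, ← hr] at habszS
    have hmul : r * (1 / (r + 1)) ≤ r * ‖S‖ := by
      calc r * (1 / (r + 1)) = r / (r + 1) := by ring
        _ ≤ r * ‖S‖ := habszS
    exact le_of_mul_le_mul_left hmul hr0
  have hSpos : 0 < ‖S‖ := lt_of_lt_of_le (by positivity) habsS
  have hSne : S ≠ 0 := by
    intro h
    rw [h, norm_zero] at hSpos
    exact lt_irrefl _ hSpos
  have hP : eval z p = ∏ i ∈ Finset.range d, (z - α i) := by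
    simp [hp, eval_prod]
  have hPne : eval z p ≠ 0 := by
    rw [hP]
    exact Finset.prod_ne_zero_iff.mpr hzne
  have hP' : eval z (derivative p) = S * eval z p := by
    rw [hp, newton_eval_deriv_prod α z _ hzne, eval_prod]
    simp [hS]
  have hP'ne : eval z (derivative p) ≠ 0 := by
    rw [hP']; exact mul_ne_zero hSne hPne
  refine ⟨hP'ne, ?_⟩
  have hdiv : eval z p / eval z (derivative p) = S⁻¹ := by
    rw [hP']
    field_simp
  rw [hdiv, norm_inv]
  rw [inv_le_comm₀ hSpos (by positivity)]
  rw [one_div] at habsS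
  exact habsS
end
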